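/- Let Γ be a finite directed graph, let p be a nonempty directed circuit in Γ and let d be a directed path starting at the basepoint of p such that p and d share no nontrivial common prefix. Then L_{p,d} = {(vp^r d, vp^s d) : r,s ≥ 0, v a suffix of p} ∪ {(q,q) : q a suffix of d} is the smallest closed inverse subsemigroup of S(Γ) containing the element (d, pd): every closed inverse subsemigroup of S(Γ) that contains (d,pd) contains L_{p,d}. -/

import Mathlib

/-- A (finite) directed graph: vertices, edges, and source/target maps. -/
structure DGraph where
  V : Type
  E : Type
  src : E → V
  tgt : E → V

namespace DGraph

/-- The vertex reached after traversing a list of edges from a vertex. -/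
def walkEnd (G : DGraph) : G.V → List G.E → G.V
  | v, [] => v
  | _, e :: l => walkEnd G (G.tgt e) l

/-- The list of edges forms a directed walk starting at the given vertex. -/
def IsWalk (G : DGraph) : G.V → List G.E → Prop
  | _, [] => True
  | v, e :: l => G.src e = v ∧ IsWalk G (G.tgt e) l

variable (G : DGraph)

@[simp] theorem walkEnd_nil (v : G.V) : G.walkEnd v [] = v := rfl
@[simp] theorem walkEnd_cons (v : G.V) (e : G.E) (l : List G.E) :
    G.walkEnd v (e :: l) = G.walkEnd (G.tgt e) l := rfl
@[simp] theorem isWalk_nil (v : G.V) : G.IsWalk v [] := trivial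
@[simp] theorem isWalk_cons (v : G.V) (e : G.E) (l : List G.E) :
    G.IsWalk v (e :: l) ↔ G.src e = v ∧ G.IsWalk (G.tgt e) l := Iff.rfl

theorem isWalk_append (v : G.V) (l1 l2 : List G.E) :
    G.IsWalk v (l1 ++ l2) ↔ G.IsWalk v l1 ∧ G.IsWalk (G.walkEnd v l1) l2 := by
  induction l1 generalizing v with
  | nil => simp [IsWalk, walkEnd]
  | cons e l ih => simp [IsWalk, walkEnd, ih, and_assoc]

/-- A directed path in `G`: an initial vertex together with a compatible
list of edges, traversed in order (empty paths are allowed). -/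
structure DPath (G : DGraph) where
  first : G.V
  edges : List G.E
  wf : G.IsWalk first edges

namespace DPath

variable {G}

/-- The terminal vertex of a directed path. -/
def last (p : G.DPath) : G.V := G.walkEnd p.first p.edges

/-- The list of vertices lying on a directed path. -/
def vertexList (p : G.DPath) : List G.V := p.first :: p.edges.map G.tgt

/-- `q` is a suffix (terminal segment) of `p`: `p = l ⬝ q` for some edge list `l`. -/
def IsSuffixOf (q p : G.DPath) : Prop :=
  ∃ l : List G.E, p.edges = l ++ q.edges ∧ q.first = G.walkEnd p.first l

end DPath

theorem isWalk_chopAppend {u v w : G.DPath} (hs : v.IsSuffixOf u) (hvw : v.first = w.first) :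
    G.IsWalk u.first (u.edges.take (u.edges.length - v.edges.length) ++ w.edges) := by
  obtain ⟨l, hl, hfst⟩ := hs
  rw [hl]
  have hlen : (l ++ v.edges).length - v.edges.length = l.length := by simp
  rw [hlen, List.take_left, G.isWalk_append]
  have hu := u.wf
  rw [hl, G.isWalk_append] at hu
  refine ⟨hu.1, ?_⟩
  rw [← hfst, hvw]
  exact w.wf

theorem isWalk_concat {p q : G.DPath} (h : q.first = p.last) :
    G.IsWalk p.first (p.edges ++ q.edges) := by
  rw [G.isWalk_append]
  refine ⟨p.wf, ?_⟩
  show G.IsWalk p.last q.edges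
  rw [← h]
  exact q.wf

/-- Concatenation of composable directed paths. -/
def concatPath (p q : G.DPath) (h : q.first = p.last) : G.DPath :=
  ⟨p.first, p.edges ++ q.edges, G.isWalk_concat h⟩

theorem isWalk_replicate (a : G.E) (h : G.tgt a = G.src a) (m : ℕ) :
    G.IsWalk (G.src a) (List.replicate m a) := by
  induction m with
  | zero => trivial
  | succ n ih => rw [List.replicate_succ, G.isWalk_cons]; exact ⟨rfl, by rw [h]; exact ih⟩

/-- The path traversing a loop `a` exactly `m` times. -/
def loopPow (a : G.E) (h : G.tgt a = G.src a) (m : ℕ) : G.DPath :=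
  ⟨G.src a, List.replicate m a, G.isWalk_replicate a h m⟩

/-- `p` is a nonempty directed circuit. -/
def IsCircuit (p : G.DPath) : Prop := p.edges ≠ [] ∧ p.last = p.first

/-- `p` and `d` share no nontrivial common prefix (initial segment). -/
def NoCommonPrefix (p d : G.DPath) : Prop :=
  ∀ l : List G.E, l ≠ [] → l <+: p.edges → ¬ l <+: d.edges

end DGraph

/-- The underlying set of the graph inverse semigroup `S(Γ)`: pairs of directed
paths with the same initial vertex, together with a zero element. -/
inductive GIS (G : DGraph) where
  | zero : GIS G
  | pair (a b : G.DPath) (h : a.first = b.first) : GIS G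

namespace GIS

open scoped Classical in
/-- The multiplication of the graph inverse semigroup:
`(t,u)(v,w) = (t,pw)` if `u = pv`, `(pt,w)` if `v = pu`, and `0` otherwise. -/
noncomputable def mul {G : DGraph} : GIS G → GIS G → GIS G
  | .zero, _ => .zero
  | .pair _ _ _, .zero => .zero
  | .pair t u h1, .pair v w h2 =>
    if hs : v.IsSuffixOf u then
      .pair t ⟨t.first, u.edges.take (u.edges.length - v.edges.length) ++ w.edges,
        by rw [h1]; exact G.isWalk_chopAppend hs h2⟩ rfl
    else if hs' : u.IsSuffixOf v then
      .pair ⟨v.first, v.edges.take (v.edges.length - u.edges.length) ++ t.edges,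
        G.isWalk_chopAppend hs' h1.symm⟩ w h2
    else .zero

noncomputable instance {G : DGraph} : Mul (GIS G) := ⟨GIS.mul⟩

/-- The inverse: `(v,w)⁻¹ = (w,v)` and `0⁻¹ = 0`. -/
def inv {G : DGraph} : GIS G → GIS G
  | .zero => .zero
  | .pair a b h => .pair b a h.symm

/-- The natural partial order: `x ≤ y` iff `x = e * y` for some idempotent `e`. -/
def le {G : DGraph} (x y : GIS G) : Prop := ∃ e : GIS G, e * e = e ∧ x = e * y

end GIS

/-- `L` is a closed inverse subsemigroup of `S(Γ)`: a nonempty subset closed under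
multiplication, inverses, and upward closed in the natural partial order. -/
def IsCISS (G : DGraph) (L : Set (GIS G)) : Prop :=
  L.Nonempty ∧ (∀ a ∈ L, ∀ b ∈ L, a * b ∈ L) ∧ (∀ a ∈ L, a.inv ∈ L) ∧
    (∀ a ∈ L, ∀ s : GIS G, GIS.le a s → s ∈ L)

/-- The closed inverse subsemigroup `↑{(u,u)}` of (finite) chain type:
all `(q,q)` with `q` a suffix of `u`. -/
def chainSet (G : DGraph) (u : G.DPath) : Set (GIS G) :=
  {x | ∃ q : G.DPath, q.IsSuffixOf u ∧ x = GIS.pair q q rfl}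

/-- The edge list of the `r`-th power of the path `p`. -/
def powEdges {G : DGraph} (p : G.DPath) (r : ℕ) : List G.E :=
  (List.replicate r p.edges).flatten

/-- The closed inverse subsemigroup of cycle type
`L_{p,d} = {(v p^r d, v p^s d) : r,s ≥ 0, v a suffix of p} ∪ {(q,q) : q a suffix of d}`. -/
def cycleSet (G : DGraph) (p d : G.DPath) : Set (GIS G) :=
  {x | (∃ (r s : ℕ) (v a b : G.DPath) (h : a.first = b.first),
          v.IsSuffixOf p ∧ x = GIS.pair a b h ∧
          a.first = v.first ∧ a.edges = v.edges ++ powEdges p r ++ d.edges ∧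
          b.first = v.first ∧ b.edges = v.edges ++ powEdges p s ++ d.edges) ∨
       (∃ q : G.DPath, q.IsSuffixOf d ∧ x = GIS.pair q q rfl)}

/-- `L` is a chain of idempotents: all elements are idempotent and any two are
comparable in the natural partial order. -/
def IsChainOfIdem (G : DGraph) (L : Set (GIS G)) : Prop :=
  (∀ x ∈ L, x * x = x) ∧ ∀ x ∈ L, ∀ y ∈ L, GIS.le x y ∨ GIS.le y x

/-- The set of right cosets `↑(Lt)` (for `t` with `t t⁻¹ ∈ L`) of a closed inverse
subsemigroup `L`. -/
def cosets (G : DGraph) (L : Set (GIS G)) : Set (Set (GIS G)) :=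
  {C | ∃ t : GIS G, t * t.inv ∈ L ∧ C = {s | ∃ x ∈ L, GIS.le (x * t) s}}

/-- `H` and `K` are conjugate: for some `s`, `s⁻¹Hs ⊆ K` and `sKs⁻¹ ⊆ H`. -/
def Conjugate (G : DGraph) (H K : Set (GIS G)) : Prop :=
  ∃ s : GIS G, (∀ h ∈ H, s.inv * h * s ∈ K) ∧ (∀ k ∈ K, s * k * s.inv ∈ H)

/-- The set of directed paths with initial vertex `v` whose first edge (if any)
is not an edge of `w`. -/
def Npaths (G : DGraph) (v : G.V) (w : G.DPath) : Set G.DPath :=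
  {t | t.first = v ∧ ∀ e, t.edges.head? = some e → e ∉ w.edges}

/-!
Write `P M` for the path `p^M d`. Going up in the natural order of `S(Γ)` means deleting a common
initial segment from both paths of a pair, so every element of `L_{p,d}` lies above some
`(P M, P N)`, and `(P M, P N) = (P 0, P M)⁻¹ (P 0, P N)` with `(P 0, P N) = (d, pd)^N`; this
gives minimality. Deleting a common first edge from a pair in `L_{p,d}` stays in `L_{p,d}`: the
only pairs where this could fail are `(d, p^s d)` and `(p^s d, d)` with `s > 0`, whose entries
start with different edges because `p` and `d` share no nontrivial prefix. Hence `L_{p,d}` is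
exactly the set of elements above some `(P M, P N)`. It is closed under products because, after
prepending powers of `p`, `(P M, P N) ≤ (A, B)` and `(P M', P N') ≤ (C, F)` with `C` a suffix of
`B` give `(P (M' + M), P (N + N')) ≤ (A, B)(C, F)`; the case where `B` is a suffix of `C` is the
mirror image.
-/
namespace DGraph

variable {G : DGraph}

theorem walkEnd_append (v : G.V) (l₁ l₂ : List G.E) :
    G.walkEnd v (l₁ ++ l₂) = G.walkEnd (G.walkEnd v l₁) l₂ := by
  induction l₁ generalizing v with
  | nil => rfl
  | cons e l ih => exact ih _

namespace DPath

@[ext] theorem ext {a b : G.DPath} (h₁ : a.first = b.first) (h₂ : a.edges = b.edges) :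
    a = b := by
  cases a; cases b; cases h₁; cases h₂; rfl

def IsSuffixAfter (q : G.DPath) (l : List G.E) (p : G.DPath) : Prop :=
  p.edges = l ++ q.edges ∧ q.first = G.walkEnd p.first l

theorem isSuffixAfter_nil_iff {q p : G.DPath} : q.IsSuffixAfter [] p ↔ q = p := by
  refine ⟨fun h => ext h.2 h.1.symm, ?_⟩
  rintro rfl
  exact ⟨rfl, rfl⟩

theorem IsSuffixAfter.isSuffixOf {q p : G.DPath} {l : List G.E} (h : q.IsSuffixAfter l p) :
    q.IsSuffixOf p :=
  ⟨l, h⟩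

theorem IsSuffixAfter.trans {q u w : G.DPath} {l₁ l₂ : List G.E} (h₁ : q.IsSuffixAfter l₁ u)
    (h₂ : u.IsSuffixAfter l₂ w) : q.IsSuffixAfter (l₂ ++ l₁) w :=
  ⟨by rw [h₂.1, h₁.1, List.append_assoc], by rw [h₁.2, h₂.2, walkEnd_append]⟩

theorem IsSuffixAfter.prefix_unique {q p : G.DPath} {l₁ l₂ : List G.E}
    (h₁ : q.IsSuffixAfter l₁ p) (h₂ : q.IsSuffixAfter l₂ p) : l₁ = l₂ :=
  List.append_cancel_right (h₁.1.symm.trans h₂.1)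

theorem IsSuffixAfter.isSuffixOf_or_isSuffixOf {q₁ q₂ p : G.DPath} {l₁ l₂ : List G.E}
    (h₁ : q₁.IsSuffixAfter l₁ p) (h₂ : q₂.IsSuffixAfter l₂ p) :
    q₁.IsSuffixOf q₂ ∨ q₂.IsSuffixOf q₁ := by
  rcases List.append_eq_append_iff.mp (h₁.1.symm.trans h₂.1) with
    ⟨m, rfl, hm⟩ | ⟨m, rfl, hm⟩
  · exact .inr ⟨m, hm, by rw [h₂.2, h₁.2, walkEnd_append]⟩
  · exact .inl ⟨m, hm, by rw [h₁.2, h₂.2, walkEnd_append]⟩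

def drop (X : G.DPath) (n : ℕ) : G.DPath where
  first := G.walkEnd X.first (X.edges.take n)
  edges := X.edges.drop n
  wf := by
    have h := X.wf
    rw [← List.take_append_drop n X.edges, G.isWalk_append] at h
    exact h.2

theorem drop_isSuffixAfter (X : G.DPath) (n : ℕ) :
    (X.drop n).IsSuffixAfter (X.edges.take n) X :=
  ⟨(List.take_append_drop n _).symm, rfl⟩

theorem IsSuffixAfter.exists_of_append {q p : G.DPath} {l₁ l₂ : List G.E}
    (h : q.IsSuffixAfter (l₁ ++ l₂) p) :
    ∃ u : G.DPath, u.IsSuffixAfter l₁ p ∧ q.IsSuffixAfter l₂ u := by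
  have htake : p.edges.take l₁.length = l₁ := by simp [h.1]
  have hdrop := p.drop_isSuffixAfter l₁.length
  rw [htake] at hdrop
  refine ⟨p.drop l₁.length, hdrop, ?_, ?_⟩
  · simp [drop, h.1]
  · rw [h.2, walkEnd_append]
    simp only [drop, htake]

end DPath

end DGraph

namespace GIS

open DGraph DGraph.DPath

variable {G : DGraph}

theorem exists_mul_eq_of_isSuffixAfter {t u v w : G.DPath} {h₁ : t.first = u.first}
    {h₂ : v.first = w.first} {l : List G.E} (hv : v.IsSuffixAfter l u) :
    ∃ (b : G.DPath) (hb : t.first = b.first), b.edges = l ++ w.edges ∧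
      pair t u h₁ * pair v w h₂ = pair t b hb := by
  have hmul : pair t u h₁ * pair v w h₂ = pair t ⟨t.first,
      u.edges.take (u.edges.length - v.edges.length) ++ w.edges,
      by rw [h₁]; exact G.isWalk_chopAppend hv.isSuffixOf h₂⟩ rfl := by
    show GIS.mul _ _ = _
    simp only [GIS.mul]
    rw [dif_pos hv.isSuffixOf]
  exact ⟨_, _, by simp [hv.1], hmul⟩

theorem exists_mul_eq_of_not_isSuffixOf {t u v w : G.DPath} {h₁ : t.first = u.first}
    {h₂ : v.first = w.first} {l : List G.E} (hv : ¬ v.IsSuffixOf u) (hu : u.IsSuffixAfter l v) :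
    ∃ (a : G.DPath) (ha : a.first = w.first), a.edges = l ++ t.edges ∧
      pair t u h₁ * pair v w h₂ = pair a w ha := by
  have hmul : pair t u h₁ * pair v w h₂ = pair ⟨v.first,
      v.edges.take (v.edges.length - u.edges.length) ++ t.edges,
      G.isWalk_chopAppend hu.isSuffixOf h₁.symm⟩ w h₂ := by
    show GIS.mul _ _ = _
    simp only [GIS.mul]
    rw [dif_neg hv, dif_pos hu.isSuffixOf]
  exact ⟨_, _, by simp [hu.1], hmul⟩

theorem pair_mul_pair_eq_zero {t u v w : G.DPath} {h₁ : t.first = u.first}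
    {h₂ : v.first = w.first} (hv : ¬ v.IsSuffixOf u) (hu : ¬ u.IsSuffixOf v) :
    pair t u h₁ * pair v w h₂ = zero := by
  show GIS.mul _ _ = _
  simp only [GIS.mul]
  rw [dif_neg hv, dif_neg hu]

theorem eq_of_pair_mul_self {c f : G.DPath} {h : c.first = f.first}
    (he : pair c f h * pair c f h = pair c f h) : c = f := by
  by_cases hcf : c.IsSuffixOf f
  · obtain ⟨l, hl⟩ := hcf
    obtain ⟨b, _, hb, hmul⟩ := exists_mul_eq_of_isSuffixAfter (h₁ := h) (w := f) hl
    obtain ⟨-, rfl⟩ := pair.inj (hmul.symm.trans he)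
    rw [List.append_left_eq_self.mp hb.symm] at hl
    exact ext h hl.1.symm
  · by_cases hfc : f.IsSuffixOf c
    · obtain ⟨l, hl⟩ := hfc
      obtain ⟨a, _, ha, hmul⟩ := exists_mul_eq_of_not_isSuffixOf (h₁ := h) (h₂ := h) hcf hl
      obtain ⟨rfl, -⟩ := pair.inj (hmul.symm.trans he)
      rw [List.append_left_eq_self.mp ha.symm] at hl
      exact ext h hl.1
    · rw [pair_mul_pair_eq_zero hcf hfc] at he
      nomatch he

theorem pair_mul_self (a : G.DPath) : pair a a rfl * pair a a rfl = pair a a rfl := by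
  obtain ⟨a', ha', ha'e, hmul⟩ :=
    exists_mul_eq_of_isSuffixAfter (h₁ := rfl) (h₂ := rfl)
      (isSuffixAfter_nil_iff.mpr (rfl : a = a))
  obtain rfl : a' = a := ext ha'.symm ha'e
  exact hmul

theorem le_pair_iff {a b c f : G.DPath} {h : a.first = b.first} {h' : c.first = f.first} :
    GIS.le (pair a b h) (pair c f h') ↔ ∃ l, c.IsSuffixAfter l a ∧ f.IsSuffixAfter l b := by
  constructor
  · rintro ⟨e, he, hx⟩
    cases e with
    | zero => nomatch hx
    | pair c₁ c₂ hc =>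
      obtain rfl := eq_of_pair_mul_self he
      by_cases hcc : c.IsSuffixOf c₁
      · obtain ⟨l, hl⟩ := hcc
        obtain ⟨b', _, hb', hmul⟩ := exists_mul_eq_of_isSuffixAfter (h₁ := hc) (h₂ := h') hl
        obtain ⟨rfl, rfl⟩ := pair.inj (hx.trans hmul)
        exact ⟨l, hl, hb', by rw [← h', hl.2, h]⟩
      · by_cases hcc' : c₁.IsSuffixOf c
        · obtain ⟨l, hl⟩ := hcc'
          obtain ⟨a', ha', ha'e, hmul⟩ :=
            exists_mul_eq_of_not_isSuffixOf (h₁ := hc) (h₂ := h') hcc hl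
          obtain ⟨rfl, rfl⟩ := pair.inj (hx.trans hmul)
          obtain rfl : a = c := ext (ha'.trans h'.symm) (ha'e.trans hl.1.symm)
          exact ⟨[], isSuffixAfter_nil_iff.mpr rfl, isSuffixAfter_nil_iff.mpr rfl⟩
        · rw [pair_mul_pair_eq_zero hcc hcc'] at hx
          nomatch hx
  · rintro ⟨l, hca, hfb⟩
    refine ⟨pair a a rfl, pair_mul_self a, ?_⟩
    obtain ⟨b', hb', hb'e, hmul⟩ :=
      exists_mul_eq_of_isSuffixAfter (h₁ := rfl) (h₂ := h') hca
    obtain rfl : b' = b := ext (hb'.symm.trans h) (hb'e.trans hfb.1.symm)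
    exact hmul.symm

theorem exists_eq_pair_of_le {a b : G.DPath} {h : a.first = b.first} {s : GIS G}
    (hs : GIS.le (pair a b h) s) : ∃ c f h', s = pair c f h' := by
  obtain ⟨e, -, hx⟩ := hs
  cases s with
  | zero => cases e <;> nomatch hx
  | pair c f h' => exact ⟨c, f, h', rfl⟩

theorem le_pair_swap {a b c f : G.DPath} {h : a.first = b.first} {h' : c.first = f.first}
    (hle : GIS.le (pair a b h) (pair c f h')) : GIS.le (pair b a h.symm) (pair f c h'.symm) := by
  obtain ⟨l, hca, hfb⟩ := le_pair_iff.mp hle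
  exact le_pair_iff.mpr ⟨l, hfb, hca⟩

end GIS

namespace DGraph

variable {G : DGraph} {p d : G.DPath}

theorem powEdges_add (p : G.DPath) (m n : ℕ) :
    powEdges p (m + n) = powEdges p m ++ powEdges p n := by
  simp only [powEdges, List.replicate_add, List.flatten_append]

@[simp] theorem powEdges_zero (p : G.DPath) : powEdges p 0 = [] := rfl

theorem powEdges_succ (p : G.DPath) (k : ℕ) : powEdges p (k + 1) = p.edges ++ powEdges p k := by
  rw [Nat.add_comm, powEdges_add]
  simp [powEdges]

theorem walkEnd_powEdges (hp : p.last = p.first) (k : ℕ) :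
    G.walkEnd p.first (powEdges p k) = p.first := by
  induction k with
  | zero => rfl
  | succ k ih =>
    rwa [powEdges_succ, walkEnd_append, show G.walkEnd p.first p.edges = p.first from hp]

theorem isWalk_powEdges (hp : p.last = p.first) (k : ℕ) : G.IsWalk p.first (powEdges p k) := by
  induction k with
  | zero => trivial
  | succ k ih =>
    rw [powEdges_succ, G.isWalk_append, show G.walkEnd p.first p.edges = p.first from hp]
    exact ⟨p.wf, ih⟩

theorem NoCommonPrefix.head?_ne (hpre : G.NoCommonPrefix p d) (hp : p.edges ≠ [])
    (z : List G.E) : (p.edges ++ z).head? ≠ d.edges.head? := by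
  obtain ⟨e, t, hpe⟩ := List.exists_cons_of_ne_nil hp
  intro he
  obtain ⟨t', hde⟩ : ∃ t', d.edges = e :: t' := by
    rw [hpe] at he
    cases hd : d.edges with
    | nil => simp [hd] at he
    | cons e' t' => simp_all
  exact hpre [e] (List.cons_ne_nil _ _) (by simp [hpe]) (by simp [hde])

end DGraph

open DGraph DGraph.DPath GIS

section CycleSet

variable {G : DGraph} {p d : G.DPath}

/-- The path `p^M d`. -/
def powPath (hp : G.IsCircuit p) (hd : d.first = p.first) (M : ℕ) : G.DPath where
  first := p.first
  edges := powEdges p M ++ d.edges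
  wf := by
    rw [G.isWalk_append, walkEnd_powEdges hp.2]
    exact ⟨isWalk_powEdges hp.2 M, hd ▸ d.wf⟩

-- A named proof: with `rfl` in `powPair`, unifying `powPair ?M ?N` against a pair forces `?M = ?N`.
theorem powPath_first (hp : G.IsCircuit p) (hd : d.first = p.first) (M N : ℕ) :
    (powPath hp hd M).first = (powPath hp hd N).first :=
  rfl

def powPair (hp : G.IsCircuit p) (hd : d.first = p.first) (M N : ℕ) : GIS G :=
  pair (powPath hp hd M) (powPath hp hd N) (powPath_first hp hd M N)

theorem powPath_isSuffixAfter (hp : G.IsCircuit p) (hd : d.first = p.first) (k M : ℕ) :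
    (powPath hp hd M).IsSuffixAfter (powEdges p k) (powPath hp hd (k + M)) :=
  ⟨by simp [powPath, powEdges_add], (walkEnd_powEdges hp.2 k).symm⟩

theorem pair_concatPath_eq_powPair (hp : G.IsCircuit p) (hd : d.first = p.first) :
    pair d (G.concatPath p d (hd.trans hp.2.symm)) hd = powPair hp hd 0 1 := by
  congr 1 <;> ext <;> simp [powPath, concatPath, powEdges, hd]

theorem powPair_mul_powPair (hp : G.IsCircuit p) (hd : d.first = p.first) (M N K k : ℕ) :
    powPair hp hd M (k + K) * powPair hp hd K N = powPair hp hd M (k + N) := by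
  obtain ⟨b, hb, hbe, hmul⟩ :=
    exists_mul_eq_of_isSuffixAfter (t := powPath hp hd M) (u := powPath hp hd (k + K))
      (v := powPath hp hd K) (w := powPath hp hd N) (h₁ := rfl) (h₂ := rfl)
      (powPath_isSuffixAfter hp hd k K)
  obtain rfl : b = powPath hp hd (k + N) := ext hb.symm (by simp [hbe, powPath, powEdges_add])
  exact hmul

@[simp] theorem powPair_inv (hp : G.IsCircuit p) (hd : d.first = p.first) (M N : ℕ) :
    (powPair hp hd M N).inv = powPair hp hd N M :=
  rfl

theorem powPair_le_shift (hp : G.IsCircuit p) (hd : d.first = p.first) {A B : G.DPath}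
    {h : A.first = B.first} {M N : ℕ} (k : ℕ)
    (hle : GIS.le (powPair hp hd M N) (pair A B h)) :
    GIS.le (powPair hp hd (k + M) (k + N)) (pair A B h) := by
  obtain ⟨l, hA, hB⟩ := le_pair_iff.mp hle
  exact le_pair_iff.mpr ⟨_, hA.trans (powPath_isSuffixAfter hp hd k M),
    hB.trans (powPath_isSuffixAfter hp hd k N)⟩

theorem powPair_le_of_mul (hp : G.IsCircuit p) (hd : d.first = p.first) {A B C F b : G.DPath}
    {hAB : A.first = B.first} {hCF : C.first = F.first} {hAb : A.first = b.first}
    {l : List G.E} {M N M' N' : ℕ}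
    (hx : GIS.le (powPair hp hd M N) (pair A B hAB))
    (hy : GIS.le (powPair hp hd M' N') (pair C F hCF))
    (hCB : C.IsSuffixAfter l B) (hb : b.edges = l ++ F.edges) :
    GIS.le (powPair hp hd (M' + M) (N + N')) (pair A b hAb) := by
  obtain ⟨k, hA, hB⟩ := le_pair_iff.mp (powPair_le_shift hp hd M' hx)
  obtain ⟨k', hC, hF⟩ := le_pair_iff.mp hy
  -- both sides are the part of `P (M' + N)` in front of `C`
  have hk : k ++ l = powEdges p N ++ k' := by
    refine (hCB.trans hB).prefix_unique ?_
    rw [Nat.add_comm]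
    exact hC.trans (powPath_isSuffixAfter hp hd N M')
  refine le_pair_iff.mpr ⟨k, hA, ?_, hAb.symm.trans hA.2⟩
  show powEdges p (N + N') ++ d.edges = k ++ b.edges
  rw [hb, ← List.append_assoc, hk, List.append_assoc, ← hF.1, powEdges_add, List.append_assoc]
  rfl

theorem pair_mem_cycleSet {a b v : G.DPath} {h : a.first = b.first} (hv : v.IsSuffixOf p)
    (r s : ℕ) (ha : a.first = v.first) (ha' : a.edges = v.edges ++ powEdges p r ++ d.edges)
    (hb' : b.edges = v.edges ++ powEdges p s ++ d.edges) : pair a b h ∈ cycleSet G p d :=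
  .inl ⟨r, s, v, a, b, h, hv, rfl, ha, ha', h.symm.trans ha, hb'⟩

theorem pair_self_mem_cycleSet {q : G.DPath} (hq : q.IsSuffixOf d) :
    pair q q rfl ∈ cycleSet G p d :=
  .inr ⟨q, hq, rfl⟩

theorem powPair_mem_cycleSet (hp : G.IsCircuit p) (hd : d.first = p.first) (M N : ℕ) :
    powPair hp hd M N ∈ cycleSet G p d :=
  pair_mem_cycleSet (v := ⟨p.first, [], trivial⟩) ⟨p.edges, by simp, hp.2.symm⟩ M N rfl rfl
    rfl

theorem inv_mem_cycleSet {x : GIS G} (hx : x ∈ cycleSet G p d) : x.inv ∈ cycleSet G p d := by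
  rcases hx with ⟨r, s, v, a, b, h, hv, rfl, ha, ha', hb, hb'⟩ | ⟨q, hq, rfl⟩
  · exact .inl ⟨s, r, v, b, a, h.symm, hv, rfl, hb, hb', ha, ha'⟩
  · exact .inr ⟨q, hq, rfl⟩

theorem exists_eq_pair_of_mem_cycleSet {x : GIS G} (hx : x ∈ cycleSet G p d) :
    ∃ X Y h, x = pair X Y h := by
  rcases hx with ⟨r, s, v, a, b, h, -, rfl, -⟩ | ⟨q, -, rfl⟩
  · exact ⟨a, b, h, rfl⟩
  · exact ⟨q, q, rfl, rfl⟩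

theorem exists_powPair_le (hp : G.IsCircuit p) (hd : d.first = p.first) {x : GIS G}
    (hx : x ∈ cycleSet G p d) : ∃ M N, GIS.le (powPair hp hd M N) x := by
  rcases hx with ⟨r, s, v, a, b, h, ⟨u, hu⟩, rfl, ha, ha', _, hb'⟩ |
    ⟨q, ⟨l, hl⟩, rfl⟩
  · refine ⟨r + 1, s + 1, le_pair_iff.mpr ⟨u, ⟨?_, ?_⟩, ⟨?_, ?_⟩⟩⟩
    · simp [powPath, powEdges_succ, hu.1, ha']
    · exact ha.trans hu.2
    · simp [powPath, powEdges_succ, hu.1, hb']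
    · exact (h.symm.trans ha).trans hu.2
  · exact ⟨0, 0, le_pair_iff.mpr ⟨l, ⟨hl.1, hd ▸ hl.2⟩, ⟨hl.1, hd ▸ hl.2⟩⟩⟩

theorem pair_mem_cycleSet_of_cons {v A B : G.DPath} {h : A.first = B.first} {e : G.E}
    {t : List G.E} {r s : ℕ} (hv : v.IsSuffixOf p) (hve : v.edges = e :: t)
    (hA : A.first = G.tgt e) (hA' : A.edges = t ++ powEdges p r ++ d.edges)
    (hB' : B.edges = t ++ powEdges p s ++ d.edges) : pair A B h ∈ cycleSet G p d := by
  obtain ⟨u, hu⟩ := hv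
  have hv' : (v.drop 1).IsSuffixAfter [e] v := by simpa [hve] using v.drop_isSuffixAfter 1
  refine pair_mem_cycleSet (hv'.trans hu).isSuffixOf r s (hA.trans hv'.2.symm) ?_ ?_ <;>
    simp [drop, hve, hA', hB']

theorem pair_mem_cycleSet_of_isSuffixAfter_singleton (hp : G.IsCircuit p)
    (hpre : G.NoCommonPrefix p d) {X Y A B : G.DPath} {hXY : X.first = Y.first}
    {h : A.first = B.first} {e : G.E}
    (hx : pair X Y hXY ∈ cycleSet G p d) (hA : A.IsSuffixAfter [e] X)
    (hB : B.IsSuffixAfter [e] Y) : pair A B h ∈ cycleSet G p d := by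
  have hAe : A.first = G.tgt e := hA.2
  rcases hx with ⟨r, s, v, a, b, _, hv, hx, _, ha', _, hb'⟩ | ⟨q, hq, hx⟩
  · obtain ⟨rfl, rfl⟩ := pair.inj hx
    rw [hA.1] at ha'
    rw [hB.1] at hb'
    cases hve : v.edges with
    | cons e' t =>
      simp only [hve, List.cons_append, List.cons.injEq] at ha' hb'
      obtain ⟨rfl, hA'⟩ := ha'
      exact pair_mem_cycleSet_of_cons hv hve hAe hA' hb'.2
    | nil =>
      rcases r with _ | r <;> rcases s with _ | s
      · obtain rfl : A = B := ext h (by simpa [hve] using ha'.trans hb'.symm)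
        exact pair_self_mem_cycleSet ⟨[e], by simpa [hve] using ha'.symm, hAe⟩
      · refine absurd ?_ (hpre.head?_ne hp.1 (powEdges p s ++ d.edges))
        simp only [hve, powEdges_succ, powEdges_zero, List.nil_append, List.append_assoc]
          at ha' hb'
        rw [← hb', ← ha']
        rfl
      · refine absurd ?_ (hpre.head?_ne hp.1 (powEdges p r ++ d.edges))
        simp only [hve, powEdges_succ, powEdges_zero, List.nil_append, List.append_assoc]
          at ha' hb'
        rw [← ha', ← hb']
        rfl
      · -- `p^(r+1) d = p · p^r d`: use `p` itself as the suffix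
        obtain ⟨e', t, hpe⟩ := List.exists_cons_of_ne_nil hp.1
        simp only [hve, powEdges_succ, hpe, List.nil_append, List.cons_append,
          List.cons.injEq] at ha' hb'
        obtain ⟨rfl, hA'⟩ := ha'
        exact pair_mem_cycleSet_of_cons ⟨[], by simp, rfl⟩ hpe hAe hA' hb'.2
  · obtain ⟨rfl, rfl⟩ := pair.inj hx
    obtain rfl : A = B := ext h (List.append_cancel_left (hA.1.symm.trans hB.1))
    obtain ⟨l, hl⟩ := hq
    exact pair_self_mem_cycleSet (hA.trans hl).isSuffixOf

theorem pair_mem_cycleSet_of_isSuffixAfter (hp : G.IsCircuit p) (hpre : G.NoCommonPrefix p d)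
    {X Y A B : G.DPath} {hXY : X.first = Y.first} {h : A.first = B.first} {l : List G.E}
    (hx : pair X Y hXY ∈ cycleSet G p d) (hA : A.IsSuffixAfter l X)
    (hB : B.IsSuffixAfter l Y) : pair A B h ∈ cycleSet G p d := by
  induction l generalizing X Y with
  | nil =>
    obtain rfl := isSuffixAfter_nil_iff.mp hA
    obtain rfl := isSuffixAfter_nil_iff.mp hB
    exact hx
  | cons e l ih =>
    obtain ⟨X', hX', hA⟩ := IsSuffixAfter.exists_of_append (l₁ := [e]) hA
    obtain ⟨Y', hY', hB⟩ := IsSuffixAfter.exists_of_append (l₁ := [e]) hB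
    exact ih (pair_mem_cycleSet_of_isSuffixAfter_singleton hp hpre
      (h := hX'.2.trans hY'.2.symm) hx hX' hY') hA hB

theorem mem_cycleSet_of_le (hp : G.IsCircuit p) (hpre : G.NoCommonPrefix p d) {x s : GIS G}
    (hx : x ∈ cycleSet G p d) (hle : GIS.le x s) : s ∈ cycleSet G p d := by
  obtain ⟨X, Y, hXY, rfl⟩ := exists_eq_pair_of_mem_cycleSet hx
  obtain ⟨A, B, hAB, rfl⟩ := exists_eq_pair_of_le hle
  obtain ⟨l, hA, hB⟩ := le_pair_iff.mp hle
  exact pair_mem_cycleSet_of_isSuffixAfter hp hpre hx hA hB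

theorem mem_cycleSet_iff (hp : G.IsCircuit p) (hd : d.first = p.first)
    (hpre : G.NoCommonPrefix p d) {x : GIS G} :
    x ∈ cycleSet G p d ↔ ∃ M N, GIS.le (powPair hp hd M N) x :=
  ⟨exists_powPair_le hp hd,
    fun ⟨M, N, hle⟩ => mem_cycleSet_of_le hp hpre (powPair_mem_cycleSet hp hd M N) hle⟩

theorem mul_mem_cycleSet (hp : G.IsCircuit p) (hd : d.first = p.first)
    (hpre : G.NoCommonPrefix p d) {x y : GIS G}
    (hx : x ∈ cycleSet G p d) (hy : y ∈ cycleSet G p d) : x * y ∈ cycleSet G p d := by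
  obtain ⟨M, N, hMN⟩ := exists_powPair_le hp hd hx
  obtain ⟨M', N', hMN'⟩ := exists_powPair_le hp hd hy
  obtain ⟨A, B, hAB, rfl⟩ := exists_eq_pair_of_le hMN
  obtain ⟨C, F, hCF, rfl⟩ := exists_eq_pair_of_le hMN'
  rw [mem_cycleSet_iff hp hd hpre]
  obtain ⟨k, -, hB⟩ := le_pair_iff.mp (powPair_le_shift hp hd M' hMN)
  obtain ⟨k', hC, -⟩ := le_pair_iff.mp (powPair_le_shift hp hd N hMN')
  rw [Nat.add_comm N M'] at hC
  by_cases hCB : C.IsSuffixOf B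
  · obtain ⟨l, hl⟩ := hCB
    obtain ⟨b, _, hbe, hmul⟩ := exists_mul_eq_of_isSuffixAfter (h₁ := hAB) (h₂ := hCF) hl
    rw [hmul]
    exact ⟨_, _, powPair_le_of_mul hp hd hMN hMN' hl hbe⟩
  · obtain ⟨l, hl⟩ := (hC.isSuffixOf_or_isSuffixOf hB).resolve_left hCB
    obtain ⟨a, haF, hae, hmul⟩ :=
      exists_mul_eq_of_not_isSuffixOf (h₁ := hAB) (h₂ := hCF) hCB hl
    rw [hmul]
    exact ⟨_, _, le_pair_swap
      (powPair_le_of_mul hp hd (hAb := haF.symm) (le_pair_swap hMN') (le_pair_swap hMN) hl hae)⟩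

theorem isCISS_cycleSet (hp : G.IsCircuit p) (hd : d.first = p.first)
    (hpre : G.NoCommonPrefix p d) : IsCISS G (cycleSet G p d) :=
  ⟨⟨_, powPair_mem_cycleSet hp hd 0 0⟩, fun _ hx _ hy => mul_mem_cycleSet hp hd hpre hx hy,
    fun _ hx => inv_mem_cycleSet hx, fun _ hx _ hle => mem_cycleSet_of_le hp hpre hx hle⟩

theorem cycleSet_subset (hp : G.IsCircuit p) (hd : d.first = p.first) {L : Set (GIS G)}
    (hL : IsCISS G L) (hgen : powPair hp hd 0 1 ∈ L) :
    cycleSet G p d ⊆ L := by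
  obtain ⟨-, hmul, hinv, hup⟩ := hL
  have hzero : ∀ N, powPair hp hd 0 N ∈ L := by
    intro N
    induction N with
    | zero =>
      have h : powPair hp hd 0 1 * (powPair hp hd 0 1).inv = powPair hp hd 0 0 :=
        powPair_mul_powPair hp hd 0 0 1 0
      exact h ▸ hmul _ hgen _ (hinv _ hgen)
    | succ N ih =>
      have h : powPair hp hd 0 N * powPair hp hd 0 1 = powPair hp hd 0 (N + 1) :=
        powPair_mul_powPair hp hd 0 1 0 N
      exact h ▸ hmul _ ih _ hgen
  have hpow : ∀ M N, powPair hp hd M N ∈ L := by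
    intro M N
    have h : (powPair hp hd 0 M).inv * powPair hp hd 0 N = powPair hp hd M N := by
      simpa using powPair_mul_powPair hp hd M N 0 0
    exact h ▸ hmul _ (hinv _ (hzero M)) _ (hzero N)
  intro x hx
  obtain ⟨M, N, hle⟩ := exists_powPair_le hp hd hx
  exact hup _ (hpow M N) x hle

end CycleSet

theorem stmt_5_general (G : DGraph) (p d : G.DPath)
    (hp : G.IsCircuit p) (hd : d.first = p.first) (hpre : G.NoCommonPrefix p d) :
    IsCISS G (cycleSet G p d) ∧
    GIS.pair d (G.concatPath p d (hd.trans hp.2.symm)) hd ∈ cycleSet G p d ∧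
    ∀ L : Set (GIS G), IsCISS G L →
      GIS.pair d (G.concatPath p d (hd.trans hp.2.symm)) hd ∈ L →
      cycleSet G p d ⊆ L := by
  rw [pair_concatPath_eq_powPair hp hd]
  exact ⟨isCISS_cycleSet hp hd hpre, powPair_mem_cycleSet hp hd 0 1,
    fun L hL hgen => cycleSet_subset hp hd hL hgen⟩

/-- `L_{p,d}` is the smallest closed inverse subsemigroup of `S(Γ)`
containing `(d, pd)`: it is a closed inverse subsemigroup containing `(d,pd)`, and
any closed inverse subsemigroup containing `(d,pd)` contains `L_{p,d}`. -/
theorem stmt_5 (G : DGraph) [Fintype G.V] [Fintype G.E] (p d : G.DPath)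
    (hp : G.IsCircuit p) (hd : d.first = p.first) (hpre : G.NoCommonPrefix p d) :
    IsCISS G (cycleSet G p d) ∧
    GIS.pair d (G.concatPath p d (hd.trans hp.2.symm)) hd ∈ cycleSet G p d ∧
    ∀ L : Set (GIS G), IsCISS G L →
      GIS.pair d (G.concatPath p d (hd.trans hp.2.symm)) hd ∈ L →
      cycleSet G p d ⊆ L :=
  stmt_5_general G p d hp hd hpre
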